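/- arXiv:2507.20332 — 2 statements merged into one kernel-verified Lean document; each statement's English description precedes it below -/
import Mathlib

section
/- Fix 1 ≤ i < j ≤ n and let f ∈ 𝔫* be the coordinate functional x ↦ x_{ij}. Then rk B_f = 2(j − i − 1). (Equivalently, the coadjoint orbit of the dual root vector e*_{ε_i−ε_j} in type A_{n−1} has dimension |Sing(ε_i − ε_j)| = 2(j − i − 1).) -/
/-!
Writing `f = e*_{ij}`, one has `f([x, y]) = ∑_{i<k<j} (x_{ik} y_{kj} - y_{ik} x_{kj})`, so
`B_f(x, ·) = ∑_{i<k<j} (x_{ik} e*_{kj} - x_{kj} e*_{ik})`. Hence the image of `x ↦ B_f(x, ·)` is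
spanned by the `2(j - i - 1)` coordinate functionals `e*_{kj}, e*_{ik}` (`i < k < j`), each of
which is attained, at `E_{ik}` and `-E_{kj}`; and coordinate functionals at distinct positions above
the diagonal are linearly independent, being dual to the `E_{pq}`.
-/

open Matrix

/-- The Lie algebra `𝔫` of strictly upper triangular `n × n` matrices over `F`,
as a submodule of the matrix space. -/
def strictUpper (F : Type*) [Field F] (n : ℕ) : Submodule F (Matrix (Fin n) (Fin n) F) where
  carrier := {x | ∀ i j : Fin n, j ≤ i → x i j = 0}
  add_mem' := by
    intro x y hx hy i j hij
    show x i j + y i j = 0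
    rw [hx i j hij, hy i j hij, add_zero]
  zero_mem' := by intro i j _; rfl
  smul_mem' := by
    intro c x hx i j hij
    show c * x i j = 0
    rw [hx i j hij, mul_zero]

lemma mul_mem_strictUpper {F : Type*} [Field F] {n : ℕ} {x y : Matrix (Fin n) (Fin n) F}
    (hx : x ∈ strictUpper F n) (hy : y ∈ strictUpper F n) : x * y ∈ strictUpper F n := by
  intro i j hji
  rw [Matrix.mul_apply]
  refine Finset.sum_eq_zero fun k _ => ?_
  rcases le_or_gt k i with h | h
  · rw [hx i k h, zero_mul]
  · rw [hy k j (hji.trans h.le), mul_zero]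

/-- The Lie bracket (commutator) on `𝔫`, as a bilinear map. -/
def commBracket (F : Type*) [Field F] (n : ℕ) :
    strictUpper F n →ₗ[F] strictUpper F n →ₗ[F] strictUpper F n :=
  LinearMap.mk₂ F
    (fun x y => ⟨(x : Matrix (Fin n) (Fin n) F) * y - (y : Matrix (Fin n) (Fin n) F) * x,
      sub_mem (mul_mem_strictUpper x.2 y.2) (mul_mem_strictUpper y.2 x.2)⟩)
    (fun x x' y => by
      apply Subtype.ext
      show ((x : Matrix (Fin n) (Fin n) F) + x') * y - (y : Matrix (Fin n) (Fin n) F) * (x + x')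
          = ((x : Matrix (Fin n) (Fin n) F) * y - (y : Matrix (Fin n) (Fin n) F) * x)
            + ((x' : Matrix (Fin n) (Fin n) F) * y - (y : Matrix (Fin n) (Fin n) F) * x')
      noncomm_ring)
    (fun c x y => by
      apply Subtype.ext
      show (c • (x : Matrix (Fin n) (Fin n) F)) * y - (y : Matrix (Fin n) (Fin n) F) * (c • x)
          = c • ((x : Matrix (Fin n) (Fin n) F) * y - (y : Matrix (Fin n) (Fin n) F) * x)
      rw [smul_mul_assoc, mul_smul_comm, smul_sub])
    (fun x y y' => by
      apply Subtype.ext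
      show (x : Matrix (Fin n) (Fin n) F) * (y + y') - ((y : Matrix (Fin n) (Fin n) F) + y') * x
          = ((x : Matrix (Fin n) (Fin n) F) * y - (y : Matrix (Fin n) (Fin n) F) * x)
            + ((x : Matrix (Fin n) (Fin n) F) * y' - (y' : Matrix (Fin n) (Fin n) F) * x)
      noncomm_ring)
    (fun c x y => by
      apply Subtype.ext
      show (x : Matrix (Fin n) (Fin n) F) * (c • y) - (c • (y : Matrix (Fin n) (Fin n) F)) * x
          = c • ((x : Matrix (Fin n) (Fin n) F) * y - (y : Matrix (Fin n) (Fin n) F) * x)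
      rw [smul_mul_assoc, mul_smul_comm, smul_sub])

/-- The elementary matrix `E_{ij}` (with `i < j`) as an element of `𝔫`. -/
def Eelt (F : Type*) [Field F] (n : ℕ) (i j : Fin n) (h : i < j) : strictUpper F n :=
  ⟨Matrix.single i j 1, by
    intro a b hba
    refine Matrix.single_apply_of_ne (i := i) (j := j) (c := (1 : F)) (i' := a) (j' := b) ?_
    rintro ⟨rfl, rfl⟩
    exact absurd h (not_lt.mpr hba)⟩

/-- The rank of the alternating bilinear form `B_f(x, y) = f([x, y])` on `𝔫`,
i.e. the rank of the linear map `𝔫 → 𝔫*`, `x ↦ B_f(x, ·)`. -/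
noncomputable def rkB (F : Type*) [Field F] (n : ℕ) (f : Module.Dual F (strictUpper F n)) : ℕ :=
  Module.finrank F (LinearMap.range (LinearMap.compr₂ (commBracket F n) f))

/-- The coordinate functional `x ↦ x i j` on `𝔫`. -/
def entryDual (F : Type*) [Field F] (n : ℕ) (i j : Fin n) :
    Module.Dual F (strictUpper F n) where
  toFun x := (x : Matrix (Fin n) (Fin n) F) i j
  map_add' _ _ := rfl
  map_smul' _ _ := rfl

section

variable {F : Type*} [Field F] {n : ℕ}

@[simp]
lemma coe_commBracket (x y : strictUpper F n) :
    (commBracket F n x y : Matrix (Fin n) (Fin n) F) = x * y - y * x := rfl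

@[simp]
lemma coe_Eelt (a b : Fin n) (h : a < b) :
    (Eelt F n a b h : Matrix (Fin n) (Fin n) F) = Matrix.single a b 1 := rfl

@[simp]
lemma entryDual_apply (i j : Fin n) (x : strictUpper F n) :
    entryDual F n i j x = (x : Matrix (Fin n) (Fin n) F) i j := rfl

lemma entryDual_commBracket (i j : Fin n) (x y : strictUpper F n) :
    entryDual F n i j (commBracket F n x y) =
      ∑ k ∈ Finset.Ioo i j,
        ((x : Matrix (Fin n) (Fin n) F) i k * (y : Matrix (Fin n) (Fin n) F) k j
          - (y : Matrix (Fin n) (Fin n) F) i k * (x : Matrix (Fin n) (Fin n) F) k j) := by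
  rw [entryDual_apply, coe_commBracket, Matrix.sub_apply, Matrix.mul_apply, Matrix.mul_apply,
    ← Finset.sum_sub_distrib]
  refine (Finset.sum_subset (Finset.subset_univ _) fun k _ hk => ?_).symm
  rcases le_or_gt k i with hki | hik
  · rw [x.2 i k hki, y.2 i k hki, zero_mul, zero_mul, sub_zero]
  · have hjk : j ≤ k := not_lt.mp fun hkj => hk (Finset.mem_Ioo.mpr ⟨hik, hkj⟩)
    rw [y.2 k j hjk, x.2 k j hjk, mul_zero, mul_zero, sub_zero]

lemma compr₂_entryDual_apply (i j : Fin n) (x : strictUpper F n) :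
    (commBracket F n).compr₂ (entryDual F n i j) x =
      ∑ k ∈ Finset.Ioo i j,
        ((x : Matrix (Fin n) (Fin n) F) i k • entryDual F n k j
          - (x : Matrix (Fin n) (Fin n) F) k j • entryDual F n i k) := by
  ext y
  rw [LinearMap.compr₂_apply, entryDual_commBracket]
  simp only [LinearMap.coe_sum, Finset.sum_apply, LinearMap.sub_apply, LinearMap.smul_apply,
    smul_eq_mul, entryDual_apply]
  exact Finset.sum_congr rfl fun k _ => by ring

lemma compr₂_entryDual_Eelt_left {i j k : Fin n} (hik : i < k) (hkj : k < j) :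
    (commBracket F n).compr₂ (entryDual F n i j) (Eelt F n i k hik) = entryDual F n k j := by
  rw [compr₂_entryDual_apply, Finset.sum_eq_single_of_mem k (Finset.mem_Ioo.mpr ⟨hik, hkj⟩)]
  · simp [hik.ne]
  · intro m hm hmk
    simp [(Finset.mem_Ioo.mp hm).1.ne, Ne.symm hmk]

lemma compr₂_entryDual_Eelt_right {i j k : Fin n} (hik : i < k) (hkj : k < j) :
    (commBracket F n).compr₂ (entryDual F n i j) (Eelt F n k j hkj) = -entryDual F n i k := by
  rw [compr₂_entryDual_apply, Finset.sum_eq_single_of_mem k (Finset.mem_Ioo.mpr ⟨hik, hkj⟩)]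
  · simp [hik.ne']
  · intro m hm hmk
    simp [hik.ne', Ne.symm hmk]

lemma linearIndependent_entryDual :
    LinearIndependent F fun p : {p : Fin n × Fin n // p.1 < p.2} => entryDual F n p.1.1 p.1.2 := by
  classical
  let evalEelt : Module.Dual F (strictUpper F n) →ₗ[F] ({p : Fin n × Fin n // p.1 < p.2} → F) :=
    LinearMap.pi fun p => Module.Dual.eval F _ (Eelt F n p.1.1 p.1.2 p.2)
  refine LinearIndependent.of_comp evalEelt ?_
  convert (Pi.basisFun F {p : Fin n × Fin n // p.1 < p.2}).linearIndependent
  ext p q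
  simp [evalEelt, Matrix.single_apply, Pi.single_apply, Subtype.ext_iff, Prod.ext_iff, eq_comm]

variable (F n) in
/-- Indexed by `Sing(ε_i - ε_j) = {ε_k - ε_j} ∪ {ε_i - ε_k}` (`i < k < j`). -/
def singDual (i j : Fin n) : Finset.Ioo i j ⊕ Finset.Ioo i j → Module.Dual F (strictUpper F n) :=
  Sum.elim (fun k => entryDual F n k j) (fun k => entryDual F n i k)

lemma linearIndependent_singDual (i j : Fin n) : LinearIndependent F (singDual F n i j) := by
  let pos : Finset.Ioo i j ⊕ Finset.Ioo i j → {p : Fin n × Fin n // p.1 < p.2} :=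
    Sum.elim (fun k => ⟨(k, j), (Finset.mem_Ioo.mp k.2).2⟩)
      (fun k => ⟨(i, k), (Finset.mem_Ioo.mp k.2).1⟩)
  have hpos : Function.Injective pos :=
    Function.Injective.sumElim (fun k m h => Subtype.ext (congrArg (·.1.1) h))
      (fun k m h => Subtype.ext (congrArg (·.1.2) h))
      fun k m h => (Finset.mem_Ioo.mp k.2).1.ne' (congrArg (·.1.1) h)
  convert linearIndependent_entryDual.comp pos hpos using 1
  funext k
  cases k <;> rfl

lemma range_compr₂_entryDual (i j : Fin n) :
    LinearMap.range ((commBracket F n).compr₂ (entryDual F n i j)) =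
      Submodule.span F (Set.range (singDual F n i j)) := by
  apply le_antisymm
  · rintro _ ⟨x, rfl⟩
    rw [compr₂_entryDual_apply]
    refine Submodule.sum_mem _ fun k hk => Submodule.sub_mem _ ?_ ?_ <;>
      refine Submodule.smul_mem _ _ (Submodule.subset_span ?_)
    exacts [⟨.inl ⟨k, hk⟩, rfl⟩, ⟨.inr ⟨k, hk⟩, rfl⟩]
  · rw [Submodule.span_le]
    rintro _ ⟨⟨k, hk⟩ | ⟨k, hk⟩, rfl⟩ <;> obtain ⟨hik, hkj⟩ := Finset.mem_Ioo.mp hk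
    · exact ⟨Eelt F n i k hik, compr₂_entryDual_Eelt_left hik hkj⟩
    · refine ⟨-Eelt F n k j hkj, ?_⟩
      rw [map_neg, compr₂_entryDual_Eelt_right hik hkj, neg_neg]
      rfl

end

theorem rkB_entryDual_general (F : Type*) [Field F] (n : ℕ) (i j : Fin n) :
    rkB F n (entryDual F n i j) = 2 * ((j : ℕ) - (i : ℕ) - 1) := by
  rw [rkB, range_compr₂_entryDual, finrank_span_eq_card (linearIndependent_singDual i j),
    Fintype.card_sum, Fintype.card_coe, Fin.card_Ioo, two_mul]

/-- For the coordinate functional `f = e*_{ε_i - ε_j}` (`i < j`), one has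
`rk B_f = 2(j - i - 1)`, i.e. the coadjoint orbit of the dual root vector
`e*_{ε_i - ε_j}` in type `A_{n-1}` has dimension `|Sing(ε_i - ε_j)| = 2(j - i - 1)`. -/
theorem rkB_entryDual (F : Type*) [Field F] [IsAlgClosed F] [CharZero F]
    (n : ℕ) (hn : 2 ≤ n) (i j : Fin n) (hij : i < j) :
    rkB F n (entryDual F n i j) = 2 * ((j : ℕ) - (i : ℕ) - 1) :=
  rkB_entryDual_general F n i j
end

section
/- For every f ∈ 𝔫* and all 1 ≤ i < j ≤ n such that there exists (a,b) ∈ Supp(f) with a ≤ i and j ≤ b, one has rk B_f ≥ 2(j − i − 1). -/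
open Matrix

/-- The support of a linear form `f ∈ 𝔫*`. -/
def Supp (F : Type*) [Field F] (n : ℕ) (f : Module.Dual F (strictUpper F n)) :
    Set (Fin n × Fin n) :=
  {p | ∃ h : p.1 < p.2, f (Eelt F n p.1 p.2 h) ≠ 0}

/-- A matrix is upper unitriangular if it has `1`'s on the diagonal and
`0`'s below the diagonal. -/
def IsUnitriangular {F : Type*} [Field F] {n : ℕ} (g : Matrix (Fin n) (Fin n) F) : Prop :=
  (∀ i, g i i = 1) ∧ ∀ i j : Fin n, j < i → g i j = 0

/-- The coadjoint orbit `N·f` of a linear form `f ∈ 𝔫*`. -/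
def coadjOrbit (F : Type*) [Field F] (n : ℕ) (f : Module.Dual F (strictUpper F n)) :
    Set (Module.Dual F (strictUpper F n)) :=
  {f' | ∃ g g' : Matrix (Fin n) (Fin n) F, IsUnitriangular g ∧ IsUnitriangular g' ∧
    g * g' = 1 ∧ g' * g = 1 ∧
    ∀ (x : strictUpper F n) (hx : g' * (x : Matrix (Fin n) (Fin n) F) * g ∈ strictUpper F n),
      f' x = f ⟨g' * (x : Matrix (Fin n) (Fin n) F) * g, hx⟩}

/- The forms `B_f(E_{ak}, ·)` and `B_f(E_{kb}, ·)`, for `(a, b) ∈ Supp f` and `i < k < j`, are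
`2(j - i - 1)` vectors of the range of `x ↦ B_f(x, ·)`. Evaluated at the vectors `E_{kb}` and
`E_{ak}` respectively they give a diagonal matrix with entries `±f(E_{ab}) ≠ 0`, since
`[E_{ak}, E_{k'b}] = δ_{kk'} E_{ab}` and all other brackets among these elementary matrices vanish;
so they are linearly independent. -/

section DiagonalPairing

variable {K V W ι : Type*} [Field K] [AddCommGroup V] [Module K V] [AddCommGroup W] [Module K W]

theorem linearIndependent_of_apply_diagonal (φ : ι → Module.Dual K W) (w : ι → W)
    (hdiag : ∀ s, φ s (w s) ≠ 0) (hoff : ∀ s t, s ≠ t → φ s (w t) = 0) :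
    LinearIndependent K φ := by
  classical
  refine linearIndependent_iff'.2 fun S g hg t ht => ?_
  have heval : ∑ s ∈ S, g s * φ s (w t) = 0 := by
    simpa using congrArg (fun ψ : Module.Dual K W => ψ (w t)) hg
  rw [Finset.sum_eq_single_of_mem t ht fun s _ hst => by rw [hoff s t hst, mul_zero]] at heval
  exact (mul_eq_zero.1 heval).resolve_right (hdiag t)

theorem card_le_finrank_range_of_apply_diagonal [Fintype ι] [FiniteDimensional K V]
    (L : V →ₗ[K] W →ₗ[K] K) (u : ι → V) (w : ι → W)
    (hdiag : ∀ s, L (u s) (w s) ≠ 0) (hoff : ∀ s t, s ≠ t → L (u s) (w t) = 0) :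
    Fintype.card ι ≤ Module.finrank K (LinearMap.range L) := by
  let v : ι → LinearMap.range L := fun s => ⟨L (u s), u s, rfl⟩
  have hv : LinearIndependent K v :=
    .of_comp (LinearMap.range L).subtype (linearIndependent_of_apply_diagonal _ w hdiag hoff)
  exact hv.fintype_card_le_finrank

end DiagonalPairing

section ElementaryBrackets

variable {F : Type*} [Field F] {n : ℕ}

theorem commBracket_swap (x y : strictUpper F n) :
    commBracket F n x y = -commBracket F n y x :=
  Subtype.ext (neg_sub _ _).symm

theorem commBracket_Eelt_Eelt_self {p q s : Fin n} (hpq : p < q) (hqs : q < s) (hps : p < s) :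
    commBracket F n (Eelt F n p q hpq) (Eelt F n q s hqs) = Eelt F n p s hps := by
  apply Subtype.ext
  show single p q 1 * single q s 1 - single q s 1 * single p q 1 = single p s (1 : F)
  rw [single_mul_single_same, single_mul_single_of_ne _ _ _ _ hps.ne', mul_one, sub_zero]

theorem commBracket_Eelt_Eelt_of_ne {p q r s : Fin n} (hpq : p < q) (hrs : r < s)
    (hqr : q ≠ r) (hsp : s ≠ p) :
    commBracket F n (Eelt F n p q hpq) (Eelt F n r s hrs) = 0 := by
  apply Subtype.ext
  show single p q 1 * single r s 1 - single r s 1 * single p q 1 = (0 : Matrix _ _ F)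
  rw [single_mul_single_of_ne _ _ _ _ hqr, single_mul_single_of_ne _ _ _ _ hsp, sub_zero]

end ElementaryBrackets

theorem rkB_ge_of_dominated_general (F : Type*) [Field F]
    (n : ℕ) (f : Module.Dual F (strictUpper F n)) (i j : Fin n)
    (h : ∃ q ∈ Supp F n f, q.1 ≤ i ∧ j ≤ q.2) :
    2 * ((j : ℕ) - (i : ℕ) - 1) ≤ rkB F n f := by
  obtain ⟨⟨a, b⟩, ⟨hab, hfab⟩, hai, hjb⟩ := h
  let ι := Finset.Ioo i j
  have hak (k : ι) : a < k := hai.trans_lt (Finset.mem_Ioo.1 k.2).1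
  have hkb (k : ι) : (k : Fin n) < b := (Finset.mem_Ioo.1 k.2).2.trans_le hjb
  let X (k : ι) := Eelt F n a k (hak k)
  let Y (k : ι) := Eelt F n k b (hkb k)
  have hcard := card_le_finrank_range_of_apply_diagonal ((commBracket F n).compr₂ f)
    (Sum.elim X Y) (Sum.elim Y X) ?diag ?off
  · rwa [Fintype.card_sum, Fintype.card_coe, Fin.card_Ioo, ← two_mul] at hcard
  case diag =>
    rintro (k | k)
    · simpa [X, Y, commBracket_Eelt_Eelt_self (hak k) (hkb k) hab] using hfab
    · simpa [X, Y, commBracket_swap (Y k), commBracket_Eelt_Eelt_self (hak k) (hkb k) hab]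
        using hfab
  case off =>
    rintro (k | k) (k' | k') hkk' <;>
      simp only [LinearMap.compr₂_apply, Sum.elim_inl, Sum.elim_inr, X, Y] <;>
      rw [commBracket_Eelt_Eelt_of_ne, map_zero]
    exacts [Subtype.val_injective.ne (ne_of_apply_ne Sum.inl hkk'), hab.ne', (hak k).ne',
      (hak k').ne', (hkb k').ne', (hkb k).ne', hab.ne',
      (Subtype.val_injective.ne (ne_of_apply_ne Sum.inr hkk')).symm]

/-- If some pair of `Supp f` dominates `(i, j)`, then `rk B_f ≥ 2(j - i - 1)`. -/
theorem rkB_ge_of_dominated (F : Type*) [Field F] [IsAlgClosed F] [CharZero F]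
    (n : ℕ) (hn : 2 ≤ n) (f : Module.Dual F (strictUpper F n)) (i j : Fin n) (hij : i < j)
    (h : ∃ q ∈ Supp F n f, q.1 ≤ i ∧ j ≤ q.2) :
    2 * ((j : ℕ) - (i : ℕ) - 1) ≤ rkB F n f :=
  rkB_ge_of_dominated_general F n f i j h
end
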